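/- arXiv:1504.06501 — 3 statements merged into one kernel-verified Lean document; each statement's English description precedes it below -/
import Mathlib

section
/- For any buffer size M and any two finite input sequences I and I' over a linear order, if I' is a subsequence of I, then OPT_M(I') ≤ OPT_M(I). -/
namespace RunGen

variable {α : Type*} [LinearOrder α]

/-- A run: a contiguous monotone (nondecreasing or nonincreasing) block. -/
def IsRun (l : List α) : Prop := l.Chain' (· ≤ ·) ∨ l.Chain' (· ≥ ·)

/-- `S` can be partitioned into `n` contiguous runs. -/
def RunsInto (S : List α) (n : ℕ) : Prop :=
  ∃ P : List (List α), P.flatten = S ∧ P.length = n ∧ ∀ r ∈ P, IsRun r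

/-- `R S` is the minimum number of contiguous runs into which `S` can be partitioned. -/
noncomputable def R (S : List α) : ℕ := sInf {n | RunsInto S n}

/-- `S` is an `M`-feasible output of the input `I`: `S` is a rearrangement of `I` in which
the element written at (0-indexed) step `t` lies among the first `M + t` input elements
(a size-`M` buffer refilled after each write). -/
def IsFeasibleOutput (M : ℕ) (I S : List α) : Prop :=
  S.length = I.length ∧
    ∃ σ : Fin I.length ≃ Fin I.length,
      ∀ t : Fin I.length, S[(t : ℕ)]? = I[(σ t : ℕ)]? ∧ (σ t : ℕ) < M + (t : ℕ)

/-- `OPT M I` is the minimum of `R S` over all `M`-feasible outputs `S` of `I`. -/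
noncomputable def OPT (M : ℕ) (I : List α) : ℕ :=
  sInf {n | ∃ S : List α, IsFeasibleOutput M I S ∧ RunsInto S n}

/-- The smallest buffered element that can continue an increasing run whose last written
element is `last?` (`none` at the start of a run, where the smallest element is chosen). -/
def nextUp (last? : Option α) (B : List α) : Option α :=
  match last? with
  | none => B.min?
  | some l => (B.filter fun x => decide (l ≤ x)).min?

/-- The largest buffered element that can continue a decreasing run. -/
def nextDown (last? : Option α) (B : List α) : Option α :=
  match last? with
  | none => B.max?
  | some l => (B.filter fun x => decide (x ≤ l)).max?

/-- Writing the maximal increasing run from buffer `B` (in arrival order) and remaining input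
`J` (`fuel` bounds the number of steps; `B.length + J.length` always suffices).  After each
write the next input element, if any, is ingested.  Returns
`(run written, final buffer in arrival order, final remaining input)`. -/
def incAux : ℕ → Option α → List α → List α → List α × List α × List α
  | 0, _, B, J => ([], B, J)
  | fuel + 1, last?, B, J =>
    match nextUp last? B with
    | none => ([], B, J)
    | some x =>
      let res := incAux fuel (some x) (B.erase x ++ J.take 1) (J.drop 1)
      (x :: res.1, res.2.1, res.2.2)

/-- Writing the maximal decreasing run; see `incAux`. -/
def decAux : ℕ → Option α → List α → List α → List α × List α × List α
  | 0, _, B, J => ([], B, J)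
  | fuel + 1, last?, B, J =>
    match nextDown last? B with
    | none => ([], B, J)
    | some x =>
      let res := decAux fuel (some x) (B.erase x ++ J.take 1) (J.drop 1)
      (x :: res.1, res.2.1, res.2.2)

/-- The maximal increasing run from the state `(B, J)`. -/
def maxIncRun (B J : List α) : List α := (incAux (B.length + J.length) none B J).1

/-- The state (buffer in arrival order, remaining input) after writing the maximal
increasing run from `(B, J)`. -/
def incState (B J : List α) : List α × List α := (incAux (B.length + J.length) none B J).2

/-- The maximal decreasing run from the state `(B, J)`. -/
def maxDecRun (B J : List α) : List α := (decAux (B.length + J.length) none B J).1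

/-- The state after writing the maximal decreasing run from `(B, J)`. -/
def decState (B J : List α) : List α × List α := (decAux (B.length + J.length) none B J).2

/-- The maximal run in direction `d` (`true` = increasing, `false` = decreasing). -/
def dirRun (d : Bool) (B J : List α) : List α := if d then maxIncRun B J else maxDecRun B J

/-- The state after writing the maximal run in direction `d`. -/
def dirState (d : Bool) (B J : List α) : List α × List α :=
  if d then incState B J else decState B J

/-- `Writes B J S B' J'`: from the state with buffer `B` (in arrival order) and remaining
input `J`, an algorithm can write exactly the sequence `S` (each written element is removed
from the buffer, and the next input element, if any, is then ingested), ending at the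
state `(B', J')`. -/
inductive Writes : List α → List α → List α → List α → List α → Prop
  | nil (B J : List α) : Writes B J [] B J
  | step (B J : List α) (i : ℕ) (S B' J' : List α) (h : i < B.length)
      (hrest : Writes (B.eraseIdx i ++ J.take 1) (J.drop 1) S B' J') :
      Writes B J (B[i]'h :: S) B' J'

/-- `ProperWrites B J P B' J'`: from state `(B, J)`, a proper algorithm (one that always
writes maximal runs) can write the list of runs `P`, ending at state `(B', J')`. -/
inductive ProperWrites : List α → List α → List (List α) → List α → List α → Prop
  | nil (B J : List α) : ProperWrites B J [] B J
  | step (d : Bool) (B J : List α) (P : List (List α)) (B' J' : List α) (hB : B ≠ [])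
      (h : ProperWrites (dirState d B J).1 (dirState d B J).2 P B' J') :
      ProperWrites B J (dirRun d B J :: P) B' J'

/-- An increasing run writable from the state `(B, J)`, the last written element being
`last?`: each written element is currently buffered and is `≥` the previously written
element, and after each write the next input element (if any) is ingested. -/
inductive IncRunFrom : Option α → List α → List α → List α → Prop
  | nil (last? : Option α) (B J : List α) : IncRunFrom last? B J []
  | cons (last? : Option α) (B J : List α) (x : α) (r : List α) (hx : x ∈ B)
      (hle : ∀ l ∈ last?, l ≤ x)
      (h : IncRunFrom (some x) (B.erase x ++ J.take 1) (J.drop 1) r) :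
      IncRunFrom last? B J (x :: r)

/-- A decreasing run writable from the state `(B, J)`; see `IncRunFrom`. -/
inductive DecRunFrom : Option α → List α → List α → List α → Prop
  | nil (last? : Option α) (B J : List α) : DecRunFrom last? B J []
  | cons (last? : Option α) (B J : List α) (x : α) (r : List α) (hx : x ∈ B)
      (hge : ∀ l ∈ last?, x ≤ l)
      (h : DecRunFrom (some x) (B.erase x ++ J.take 1) (J.drop 1) r) :
      DecRunFrom last? B J (x :: r)

/-- The optimal number of runs over all ways of writing out everything from state `(B, J)`. -/
noncomputable def OPTFrom (B J : List α) : ℕ :=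
  sInf {n | ∃ S : List α, Writes B J S [] [] ∧ RunsInto S n}

/-- Running a deterministic online algorithm `A`: at each step, given the current buffer
(in arrival order) and the output written so far, `A` chooses (the index of) the buffered
element to write next; the next input element is then ingested. -/
def runAlg (A : List α → List α → ℕ) : ℕ → List α → List α → List α → List α
  | 0, _, _, _ => []
  | fuel + 1, W, B, J =>
    match B with
    | [] => []
    | b :: Bt =>
      let i := A (b :: Bt) W % (b :: Bt).length
      let x := (b :: Bt).getD i b
      x :: runAlg A fuel (W ++ [x]) ((b :: Bt).eraseIdx i ++ J.take 1) (J.drop 1)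

/-- The output of the deterministic online algorithm `A` run with buffer size `M` on
input `I`. -/
def onlineOutput (A : List α → List α → ℕ) (M : ℕ) (I : List α) : List α :=
  runAlg A I.length [] (I.take M) (I.drop M)

/-- Running a deterministic algorithm with `v`-lookahead: its choice of which buffered
element to write may additionally depend on the next `v` not-yet-read input elements. -/
def runAlgVis (A : List α → List α → List α → ℕ) (v : ℕ) :
    ℕ → List α → List α → List α → List α
  | 0, _, _, _ => []
  | fuel + 1, W, B, J =>
    match B with
    | [] => []
    | b :: Bt =>
      let i := A (b :: Bt) W (J.take v) % (b :: Bt).length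
      let x := (b :: Bt).getD i b
      x :: runAlgVis A v fuel (W ++ [x]) ((b :: Bt).eraseIdx i ++ J.take 1) (J.drop 1)

/-- The output of the deterministic algorithm `A` with buffer size `M` and `v`-lookahead. -/
def visOutput (A : List α → List α → List α → ℕ) (v M : ℕ) (I : List α) : List α :=
  runAlgVis A v I.length [] (I.take M) (I.drop M)

/-- Alternating up-down replacement selection from a state (starting with an increasing
run when `d = true`), writing maximal runs of strictly alternating directions. -/
def altAux : ℕ → Bool → List α → List α → List α
  | 0, _, _, _ => []
  | fuel + 1, d, B, J =>
    if B = [] then []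
    else dirRun d B J ++ altAux fuel (!d) (dirState d B J).1 (dirState d B J).2

/-- The output of alternating up-down replacement selection with buffer size `M` on `I`. -/
def altOutput (M : ℕ) (I : List α) : List α :=
  altAux (I.length + 1) true (I.take M) (I.drop M)

/-- `GreedyRuns B J P`: `P` is the list of runs written by (some tie-breaking of) the
greedy algorithm from state `(B, J)`: at each decision point it writes the longer of the
two possible maximal runs (ties broken arbitrarily). -/
inductive GreedyRuns : List α → List α → List (List α) → Prop
  | nil : GreedyRuns [] [] []
  | step (d : Bool) (B J : List α) (P : List (List α)) (hB : B ≠ [])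
      (hlen : (dirRun (!d) B J).length ≤ (dirRun d B J).length)
      (h : GreedyRuns (dirState d B J).1 (dirState d B J).2 P) :
      GreedyRuns B J (dirRun d B J :: P)

/-- `PTASOut k B J S`: `S` is a possible output of the phase-based offline approximation
algorithm with parameter `k` from state `(B, J)`: while more than `k` runs remain, it
selects a sequence of `k` consecutive maximal runs writing the longest total number of
elements and writes them, followed by one additional maximal run; once everything can be
written in at most `k` (maximal) runs, it finishes using the fewest possible runs. -/
inductive PTASOut (k : ℕ) : List α → List α → List α → Prop
  | final (B J : List α) (P : List (List α)) (hP : ProperWrites B J P [] [])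
      (hk : P.length ≤ k)
      (hmin : ∀ Q : List (List α), ProperWrites B J Q [] [] → P.length ≤ Q.length) :
      PTASOut k B J P.flatten
  | phase (B J : List α) (P : List (List α)) (B' J' : List α) (r : List α)
      (B'' J'' : List α) (S : List α)
      (hnf : ¬∃ Q : List (List α), ProperWrites B J Q [] [] ∧ Q.length ≤ k)
      (hP : ProperWrites B J P B' J') (hPk : P.length = k)
      (hmax : ∀ (Q : List (List α)) (BQ JQ : List α),
        ProperWrites B J Q BQ JQ → Q.length = k → Q.flatten.length ≤ P.flatten.length)
      (hr : ProperWrites B' J' [r] B'' J'') (hS : PTASOut k B'' J'' S) :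
      PTASOut k B J (P.flatten ++ (r ++ S))

/-- An input is `c`-nearly-sorted (for buffer size `M`) if some proper optimal output
consists entirely of runs of length at least `c * M`. -/
def NearlySorted (c M : ℕ) (I : List α) : Prop :=
  ∃ P : List (List α), ProperWrites (I.take M) (I.drop M) P [] [] ∧
    R P.flatten = OPT M I ∧ ∀ r ∈ P, c * M ≤ r.length

end RunGen

/-
Restrict an `M`-feasible output `S` of `I` to the elements that come from `I'`, in the order
in which `S` writes them. The result is a subsequence of `S`, so it splits into no more runs
than `S`. It is `M`-feasible for `I'`: if its `s`-th element is the `j`-th element of `I'`,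
then of the `j + 1` elements of `I'` up to that one, at most `s` were written earlier, and
the others had all been read but not yet written at that step, so they were in the buffer,
which holds at most `M` elements. Hence `j + 1 ≤ s + M`.
-/

namespace RunGen

open Finset

variable {α : Type*}

theorem ofFn_comp_sublist {m n : ℕ} (a : Fin n → α) {e : Fin m → Fin n} (he : StrictMono e) :
    (List.ofFn (a ∘ e)).Sublist (List.ofFn a) :=
  List.sublist_iff_exists_fin_orderEmbedding_get_eq.mpr
    ⟨OrderEmbedding.ofStrictMono (fun i => Fin.cast (by simp) (e (Fin.cast (by simp) i)))
      fun _ _ hij => he hij, fun i => by simp; rfl⟩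

/-- With `τ p` the step at which input element `p` is written, the elements counted here are
those read but not yet written at step `t`. -/
theorem card_pending_le {n M : ℕ} {τ : Fin n ≃ Fin n} (hτ : ∀ p : Fin n, (p : ℕ) < M + τ p)
    (t : Fin n) : #{q : Fin n | (q : ℕ) < M + t ∧ t ≤ τ q} ≤ M := by
  have hread : #{q : Fin n | (q : ℕ) < M + t} ≤ M + t := by
    rw [Fin.card_filter_val_lt]
    exact min_le_right _ _
  have hwritten : (univ.filter fun q : Fin n => (q : ℕ) < M + t ∧ ¬ t ≤ τ q) =
      (Iio t).map τ.symm.toEmbedding := by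
    ext q
    simp only [mem_filter, mem_univ, true_and, not_le, mem_map_equiv, Equiv.symm_symm, mem_Iio]
    exact ⟨And.right, fun h => ⟨(hτ q).trans_le (by simp [h.le]), h⟩⟩
  have hsplit := card_filter_add_card_filter_not (s := univ.filter fun q : Fin n => (q : ℕ) < M + t)
    fun q => t ≤ τ q
  simp only [filter_filter, hwritten, card_map, Fin.card_Iio] at hsplit
  omega

theorem val_lt_add_of_strictMono_comp {n m M : ℕ} {τ : Fin n ≃ Fin n}
    (hτ : ∀ p : Fin n, (p : ℕ) < M + τ p) {f : Fin m → Fin n} (hf : StrictMono f)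
    {π : Fin m ≃ Fin m} (hπ : StrictMono (τ ∘ f ∘ π)) (s : Fin m) : (π s : ℕ) < M + s := by
  set i := π s
  set t := τ (f i)
  have hlate : #{j ∈ Iic i | t ≤ τ (f j)} ≤ M := by
    refine (card_le_card_of_injOn f (fun j hj => ?_) hf.injective.injOn).trans
      (card_pending_le hτ t)
    simp only [coe_filter, mem_Iic] at hj
    simp only [coe_filter, mem_univ, true_and]
    exact ⟨(Fin.le_def.mp (hf.monotone hj.1)).trans_lt (hτ (f i)), hj.2⟩
  have hearly : #{j ∈ Iic i | ¬ t ≤ τ (f j)} ≤ s := by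
    refine (card_le_card_of_injOn π.symm (fun j hj => ?_) π.symm.injective.injOn).trans
      (Fin.card_Iio s).le
    simp only [coe_filter, mem_Iic, not_le] at hj
    simp only [coe_Iio, Set.mem_Iio]
    exact hπ.lt_iff_lt.mp (by simpa [t, i] using hj.2)
  have hsplit := card_filter_add_card_filter_not (s := Iic i) fun j => t ≤ τ (f j)
  rw [Fin.card_Iic] at hsplit
  omega

theorem isFeasibleOutput_iff {M : ℕ} {I S : List α} :
    IsFeasibleOutput M I S ↔ ∃ σ : Fin I.length ≃ Fin I.length,
      (∀ t, (σ t : ℕ) < M + t) ∧ S = List.ofFn fun t => I.get (σ t) := by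
  constructor
  · rintro ⟨hlen, σ, hσ⟩
    refine ⟨σ, fun t => (hσ t).2, List.ext_getElem? fun t => ?_⟩
    by_cases ht : t < I.length
    · simpa [List.getElem?_ofFn, ht] using (hσ ⟨t, ht⟩).1
    · simp [hlen, not_lt.mp ht]
  · rintro ⟨σ, hσ, rfl⟩
    exact ⟨by simp, σ, fun t => ⟨by simp, hσ t⟩⟩

theorem isFeasibleOutput_self {M : ℕ} (hM : 0 < M) (I : List α) : IsFeasibleOutput M I I :=
  isFeasibleOutput_iff.mpr ⟨Equiv.refl _, fun t => by simp; omega, (List.ofFn_get I).symm⟩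

theorem IsFeasibleOutput.exists_sublist {M : ℕ} {I I' S : List α} (hS : IsFeasibleOutput M I S)
    (h : I'.Sublist I) : ∃ S', IsFeasibleOutput M I' S' ∧ S'.Sublist S := by
  obtain ⟨σ, hσ, rfl⟩ := isFeasibleOutput_iff.mp hS
  obtain ⟨f, hf⟩ := List.sublist_iff_exists_fin_orderEmbedding_get_eq.mp h
  set π := Tuple.sort (σ.symm ∘ f)
  have hπ : StrictMono (σ.symm ∘ f ∘ π) := (Tuple.monotone_sort _).strictMono_of_injective
    ((σ.symm.injective.comp f.injective).comp π.injective)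
  have hτ (p : Fin I.length) : (p : ℕ) < M + σ.symm p := by simpa using hσ (σ.symm p)
  refine ⟨List.ofFn fun s => I'.get (π s),
    isFeasibleOutput_iff.mpr ⟨π, val_lt_add_of_strictMono_comp hτ f.strictMono hπ, rfl⟩, ?_⟩
  have hcomp : (fun s => I'.get (π s)) = (fun t => I.get (σ t)) ∘ (σ.symm ∘ f ∘ π) := by
    funext s
    simpa using hf (π s)
  rw [hcomp]
  exact ofFn_comp_sublist _ hπ

theorem IsRun.sublist [LinearOrder α] {l l' : List α} (h : l'.Sublist l) (hl : IsRun l) :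
    IsRun l' :=
  hl.imp (fun hc => List.isChain_iff_pairwise.mpr ((List.isChain_iff_pairwise.mp hc).sublist h))
    (fun hc => List.isChain_iff_pairwise.mpr ((List.isChain_iff_pairwise.mp hc).sublist h))

theorem runsInto_of_sublist_flatten [LinearOrder α] {P : List (List α)} (hP : ∀ r ∈ P, IsRun r)
    {S : List α} (h : S.Sublist P.flatten) : RunsInto S P.length := by
  induction P generalizing S with
  | nil => exact ⟨[], (List.sublist_nil.mp h).symm, rfl, by simp⟩
  | cons r P ih =>
    obtain ⟨l₁, l₂, rfl, h₁, h₂⟩ := List.sublist_append_iff.mp (List.flatten_cons ▸ h)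
    obtain ⟨P', rfl, hlen, hP'⟩ := ih (fun q hq => hP q (List.mem_cons_of_mem r hq)) h₂
    refine ⟨l₁ :: P', rfl, by simp [hlen], ?_⟩
    simp only [List.mem_cons, forall_eq_or_imp]
    exact ⟨(hP r List.mem_cons_self).sublist h₁, hP'⟩

theorem RunsInto.sublist [LinearOrder α] {S S' : List α} {n : ℕ} (h : S'.Sublist S)
    (hS : RunsInto S n) : RunsInto S' n := by
  obtain ⟨P, rfl, rfl, hP⟩ := hS
  exact runsInto_of_sublist_flatten hP h

theorem runsInto_length [LinearOrder α] (S : List α) : RunsInto S S.length := by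
  refine ⟨S.map ([·]), ?_, by simp, ?_⟩
  · induction S <;> simp_all
  · intro r hr
    obtain ⟨a, -, rfl⟩ := List.mem_map.mp hr
    exact Or.inl (List.isChain_singleton a)

theorem OPT_zero [LinearOrder α] (I : List α) : OPT 0 I = 0 := by
  refine Nat.sInf_eq_zero.mpr ?_
  cases I with
  | nil => exact Or.inl ⟨[], ⟨rfl, Equiv.refl _, fun t => t.elim0⟩, runsInto_length []⟩
  | cons a I =>
    refine Or.inr (Set.eq_empty_of_forall_notMem fun n ⟨S, ⟨_, σ, hσ⟩, _⟩ => ?_)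
    simpa using (hσ ⟨0, by simp⟩).2

theorem OPT_le [LinearOrder α] {M n : ℕ} {I S : List α} (hS : IsFeasibleOutput M I S)
    (hn : RunsInto S n) : OPT M I ≤ n :=
  Nat.sInf_le ⟨S, hS, hn⟩

theorem exists_runsInto_OPT [LinearOrder α] {M : ℕ} (hM : 0 < M) (I : List α) :
    ∃ S, IsFeasibleOutput M I S ∧ RunsInto S (OPT M I) :=
  Nat.sInf_mem (s := {n | ∃ S, IsFeasibleOutput M I S ∧ RunsInto S n})
    ⟨_, I, isFeasibleOutput_self hM I, runsInto_length I⟩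

end RunGen

open RunGen

/-- For any buffer size `M` and inputs `I`, `I'`, if `I'` is a subsequence of `I`,
then `OPT M I' ≤ OPT M I`. -/
theorem stmt_0 {α : Type*} [LinearOrder α] (M : ℕ) (I I' : List α) (h : I'.Sublist I) :
    OPT M I' ≤ OPT M I := by
  rcases Nat.eq_zero_or_pos M with rfl | hM
  · rw [OPT_zero]
    exact Nat.zero_le _
  · obtain ⟨S, hS, hSruns⟩ := exists_runsInto_OPT hM I
    obtain ⟨S', hS', hsub⟩ := hS.exists_sublist h
    exact OPT_le hS' (hSruns.sublist hsub)
end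

section
/- At any decision state (a buffer B of at most M elements together with a remaining input sequence J), the maximal increasing run from that state covers every increasing run writable from that state: every element written in any increasing run started from that state also occurs in the maximal increasing run. Symmetrically, the maximal decreasing run covers every decreasing run writable from that state. -/
/-!
Run the maximal increasing run alongside an arbitrary increasing run from the same state.
Call the first state dominating if every element the other run may write next is admissible
for it too and buffered there at least as often. The maximal run writes the smallest
admissible element `y`, so `y ≤ x` for the element `x` written by the other run; both then
ingest the same input element, and domination persists: for `z ≥ x` a copy of `z` is lost
only if `z = y`, which forces `z = x`. A maximal run stops only when no buffered element
is admissible, so it eventually writes every admissible element of a dominating buffer, in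
particular every element of the other run. Decreasing runs are increasing runs for the dual
order.
-/

namespace RunGen

theorem length_erase_append_take_add_length_drop {α : Type*} [BEq α] [LawfulBEq α]
    {B : List α} {y : α} (hy : y ∈ B) (J : List α) :
    (B.erase y ++ J.take 1).length + (J.drop 1).length + 1 = B.length + J.length := by
  have := List.length_pos_of_mem hy
  simp only [List.length_append, List.length_erase_of_mem hy, List.length_take,
    List.length_drop]
  omega

variable {α : Type*} [LinearOrder α]

theorem exists_nextUp_eq_some {last? : Option α} {B : List α} {x : α} (hx : x ∈ B)
    (hlx : ∀ l ∈ last?, l ≤ x) :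
    ∃ y ∈ B, (∀ l ∈ last?, l ≤ y) ∧ y ≤ x ∧ nextUp last? B = some y := by
  cases last? with
  | none =>
    obtain ⟨y, hy⟩ := Option.isSome_iff_exists.mp (List.isSome_min?_of_mem hx)
    obtain ⟨hyB, hymin⟩ := List.min?_eq_some_iff.mp hy
    exact ⟨y, hyB, by simp, hymin x hx, hy⟩
  | some l =>
    have hxC : x ∈ B.filter fun z => decide (l ≤ z) := by simpa using ⟨hx, hlx l rfl⟩
    obtain ⟨y, hy⟩ := Option.isSome_iff_exists.mp (List.isSome_min?_of_mem hxC)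
    obtain ⟨hyC, hymin⟩ := List.min?_eq_some_iff.mp hy
    obtain ⟨hyB, hly⟩ := by simpa using hyC
    exact ⟨y, hyB, by simpa using hly, hymin x hxC, hy⟩

theorem exists_incAux_succ_eq {last? : Option α} {B : List α} {x : α} (hx : x ∈ B)
    (hlx : ∀ l ∈ last?, l ≤ x) (fuel : ℕ) (J : List α) :
    ∃ y ∈ B, (∀ l ∈ last?, l ≤ y) ∧ y ≤ x ∧
      (incAux (fuel + 1) last? B J).1 =
        y :: (incAux fuel (some y) (B.erase y ++ J.take 1) (J.drop 1)).1 := by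
  obtain ⟨y, hyB, hly, hyx, hy⟩ := exists_nextUp_eq_some hx hlx
  exact ⟨y, hyB, hly, hyx, by rw [incAux, hy]⟩

theorem mem_incAux_of_mem : ∀ {fuel : ℕ} {last? : Option α} {B J : List α} {x : α},
    B.length + J.length ≤ fuel → x ∈ B → (∀ l ∈ last?, l ≤ x) →
    x ∈ (incAux fuel last? B J).1
  | 0, _, B, _, _, hfuel, hx, _ => absurd hfuel (by have := List.length_pos_of_mem hx; omega)
  | fuel + 1, last?, B, J, x, hfuel, hx, hlx => by
    obtain ⟨y, hyB, -, hyx, hstep⟩ := exists_incAux_succ_eq hx hlx fuel J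
    rw [hstep, List.mem_cons]
    rcases eq_or_ne x y with hxy | hxy
    · exact .inl hxy
    · have hxB' : x ∈ B.erase y ++ J.take 1 :=
        List.mem_append_left _ ((List.mem_erase_of_ne hxy).mpr hx)
      refine .inr (mem_incAux_of_mem ?_ hxB' (by simpa using hyx))
      have := length_erase_append_take_add_length_drop hyB J
      omega

def IncDominates (la : Option α) (Ba : List α) (lg : Option α) (Bg : List α) : Prop :=
  ∀ z, (∀ l ∈ la, l ≤ z) → (∀ l ∈ lg, l ≤ z) ∧ Ba.count z ≤ Bg.count z

theorem IncDominates.refl (last? : Option α) (B : List α) : IncDominates last? B last? B :=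
  fun _ hz => ⟨hz, le_rfl⟩

theorem IncDominates.mem {la lg : Option α} {Ba Bg : List α} (h : IncDominates la Ba lg Bg)
    {x : α} (hx : x ∈ Ba) (hlx : ∀ l ∈ la, l ≤ x) : x ∈ Bg ∧ ∀ l ∈ lg, l ≤ x := by
  obtain ⟨hlgx, hcount⟩ := h x hlx
  exact ⟨List.count_pos_iff.mp ((List.count_pos_iff.mpr hx).trans_le hcount), hlgx⟩

theorem IncDominates.erase_append {la lg : Option α} {Ba Bg : List α}
    (h : IncDominates la Ba lg Bg) {x y : α} (hlx : ∀ l ∈ la, l ≤ x) (hyx : y ≤ x)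
    (t : List α) : IncDominates (some x) (Ba.erase x ++ t) (some y) (Bg.erase y ++ t) := by
  intro z hz
  have hxz : x ≤ z := by simpa using hz
  have hcount := (h z fun l hl => (hlx l hl).trans hxz).2
  have hyz : y = z → x = z := fun hyz => le_antisymm hxz (hyz ▸ hyx)
  refine ⟨by simpa using hyx.trans hxz, ?_⟩
  simp only [List.count_append, List.count_erase, beq_iff_eq]
  by_cases hy : y = z
  · simp only [hyz hy, hy, if_true]
    omega
  · simp only [hy, if_false]
    split_ifs <;> omega

theorem mem_incAux_of_incRunFrom {la : Option α} {Ba J r : List α} (hr : IncRunFrom la Ba J r) :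
    ∀ {lg : Option α} {Bg : List α} {fuel : ℕ}, Bg.length + J.length ≤ fuel →
      IncDominates la Ba lg Bg → ∀ z ∈ r, z ∈ (incAux fuel lg Bg J).1 := by
  induction hr with
  | nil => simp
  | cons la Ba J x r hx hlx _ ih =>
    intro lg Bg fuel hfuel hdom z hz
    obtain ⟨hxBg, hlgx⟩ := hdom.mem hx hlx
    rcases List.mem_cons.mp hz with rfl | hzr
    · exact mem_incAux_of_mem hfuel hxBg hlgx
    obtain ⟨fuel, rfl⟩ : ∃ f, fuel = f + 1 :=
      ⟨fuel - 1, by have := List.length_pos_of_mem hxBg; omega⟩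
    obtain ⟨y, hyB, -, hyx, hstep⟩ := exists_incAux_succ_eq hxBg hlgx fuel J
    rw [hstep]
    refine List.mem_cons_of_mem _ (ih ?_ (hdom.erase_append hlx hyx _) z hzr)
    have := length_erase_append_take_add_length_drop hyB J
    omega

theorem mem_maxIncRun_of_incRunFrom {B J r : List α} (hr : IncRunFrom none B J r) {x : α}
    (hx : x ∈ r) : x ∈ maxIncRun B J :=
  mem_incAux_of_incRunFrom hr le_rfl (.refl none B) x hx

theorem decAux_eq_incAux_toDual : ∀ (fuel : ℕ) (last? : Option α) (B J : List α),
    decAux fuel last? B J = incAux (α := αᵒᵈ) fuel last? B J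
  | 0, _, _, _ => rfl
  | fuel + 1, last?, B, J => by
    have h : nextDown last? B = nextUp (α := αᵒᵈ) last? B := by cases last? <;> rfl
    simp only [decAux, incAux, h, decAux_eq_incAux_toDual fuel]
    rfl

theorem maxDecRun_eq_maxIncRun_toDual (B J : List α) :
    maxDecRun B J = maxIncRun (α := αᵒᵈ) B J :=
  congrArg Prod.fst (decAux_eq_incAux_toDual _ _ _ _)

theorem DecRunFrom.incRunFrom_toDual {last? : Option α} {B J r : List α}
    (h : DecRunFrom last? B J r) : IncRunFrom (α := αᵒᵈ) last? B J r := by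
  induction h with
  | nil => exact .nil _ _ _
  | cons _ _ _ _ _ hx hxl _ ih => exact .cons _ _ _ _ _ hx hxl ih

end RunGen

open RunGen

theorem stmt_1_general {α : Type*} [LinearOrder α] (B J : List α) :
    (∀ r : List α, IncRunFrom none B J r → ∀ x ∈ r, x ∈ maxIncRun B J) ∧
    (∀ r : List α, DecRunFrom none B J r → ∀ x ∈ r, x ∈ maxDecRun B J) :=
  ⟨fun _ hr _ hx => mem_maxIncRun_of_incRunFrom hr hx, fun _ hr _ hx =>
    maxDecRun_eq_maxIncRun_toDual B J ▸ mem_maxIncRun_of_incRunFrom hr.incRunFrom_toDual hx⟩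

/-- At any decision state (buffer `B` of at most `M` elements, remaining input `J`), the
maximal increasing (resp. decreasing) run covers every increasing (resp. decreasing) run
writable from that state: every element written in such a run also occurs in the maximal
run in the same direction. -/
theorem stmt_1 {α : Type*} [LinearOrder α] (M : ℕ) (B J : List α) (hB : B.length ≤ M) :
    (∀ r : List α, IncRunFrom none B J r → ∀ x ∈ r, x ∈ maxIncRun B J) ∧
    (∀ r : List α, DecRunFrom none B J r → ∀ x ∈ r, x ∈ maxDecRun B J) :=
  stmt_1_general B J
end

section
/- Let a proper run-generation algorithm with buffer size M be at a decision state from which it can write either k maximal runs p_1∘⋯∘p_k or ℓ maximal runs q_1∘⋯∘q_ℓ, with |p_1∘⋯∘p_k| ≥ |q_1∘⋯∘q_ℓ|. Then for any maximal run p_{k+1} (increasing or decreasing) following p_1∘⋯∘p_k, the sequence p_1∘⋯∘p_k∘p_{k+1} covers q_1∘⋯∘q_ℓ. Consequently, the unwritten-element sequence after writing p_1∘⋯∘p_{k+1} is a subsequence of the unwritten-element sequence after writing q_1∘⋯∘q_ℓ. -/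
open RunGen

/-!
A maximal run writes out the entire buffer it starts from: the element it writes next is
always at most (for a decreasing run, at least) every buffered element that can still
continue the run, so each of them remains eligible until it is written.

After writing `S`, the written sequence together with the buffer is a rearrangement of the
first `|B| + |S|` elements of `B ++ J`, and the unwritten sequence is `B ++ J` with the
elements of `S` deleted. Hence `Q` is drawn from the first `|B| + |Q| ≤ |B| + |P|` elements,
which are `P` together with the buffer `Bp`, and `Bp` is contained in `p'`. So `Q` is a
sub-multiset of `P ++ p'`, and deleting the larger multiset leaves a subsequence.
-/

open List

theorem List.diff_sublist_diff_of_subperm {α : Type*} [BEq α] [LawfulBEq α] {l s t : List α}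
    (h : s <+~ t) : l.diff t <+ l.diff s := by
  rw [(subperm_append_diff_self_of_count_le (subperm_ext_iff.1 h)).symm.diff_left, diff_append]
  exact diff_sublist _ _

namespace RunGen

variable {α : Type*} [LinearOrder α]

/-- Like `Writes`, except that a written element leaves the buffer at its first occurrence,
as in the run-writing functions `incAux` and `decAux`. -/
inductive Emits : List α → List α → List α → List α → List α → Prop
  | nil (B J : List α) : Emits B J [] B J
  | cons {B J S B' J' : List α} {x : α} (hx : x ∈ B)
      (h : Emits (B.erase x ++ J.take 1) (J.drop 1) S B' J') : Emits B J (x :: S) B' J'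

namespace Emits

variable {B J S T B' J' B'' J'' : List α}

theorem append (h₁ : Emits B J S B' J') (h₂ : Emits B' J' T B'' J'') :
    Emits B J (S ++ T) B'' J'' := by
  induction h₁ with
  | nil => exact h₂
  | cons hx _ ih => exact .cons hx (ih h₂)

theorem perm_take (h : Emits B J S B' J') : S ++ B' ~ B ++ J.take S.length := by
  induction h with
  | nil => simp
  | @cons B J S B' J' x hx _ ih =>
    calc x :: S ++ B' ~ x :: (B.erase x ++ J.take (1 + S.length)) := by
          rw [take_add, ← append_assoc]; exact ih.cons x
      _ = x :: (B ++ J.take (S.length + 1)).erase x := by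
          rw [erase_append_left _ hx, Nat.add_comm]
      _ ~ B ++ J.take (x :: S).length := (perm_cons_erase (mem_append_left _ hx)).symm

theorem append_eq_diff (h : Emits B J S B' J') : B' ++ J' = (B ++ J).diff S := by
  induction h with
  | nil => simp
  | @cons B J S B' J' x hx _ ih =>
    rw [ih, diff_cons, append_assoc, take_append_drop, erase_append_left _ hx]

end Emits

def runAux (next : Option α → List α → Option α) :
    ℕ → Option α → List α → List α → List α × List α × List α
  | 0, _, B, J => ([], B, J)
  | fuel + 1, last?, B, J =>
    match next last? B with
    | none => ([], B, J)
    | some x =>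
      let res := runAux next fuel (some x) (B.erase x ++ J.take 1) (J.drop 1)
      (x :: res.1, res.2.1, res.2.2)

theorem incAux_eq_runAux (fuel : ℕ) (last? : Option α) (B J : List α) :
    incAux fuel last? B J = runAux nextUp fuel last? B J := by
  induction fuel generalizing last? B J with
  | zero => rfl
  | succ fuel ih =>
    simp only [incAux, runAux, ih]

theorem decAux_eq_runAux (fuel : ℕ) (last? : Option α) (B J : List α) :
    decAux fuel last? B J = runAux nextDown fuel last? B J := by
  induction fuel generalizing last? B J with
  | zero => rfl
  | succ fuel ih =>
    simp only [decAux, runAux, ih]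

/-- `c l y` means that `y` may follow `l` in a run. -/
structure IsGreedyChoice (next : Option α → List α → Option α) (c : α → α → Prop) : Prop where
  mem : ∀ {last? B x}, next last? B = some x → x ∈ B
  continues : ∀ {last? B y}, y ∈ B → (∀ l ∈ last?, c l y) → ∃ x, next last? B = some x ∧ c x y

theorem emits_runAux {next : Option α → List α → Option α}
    (hmem : ∀ {last? B x}, next last? B = some x → x ∈ B) (fuel : ℕ) (last? : Option α)
    (B J : List α) :
    Emits B J (runAux next fuel last? B J).1 (runAux next fuel last? B J).2.1
      (runAux next fuel last? B J).2.2 := by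
  induction fuel generalizing last? B J with
  | zero => exact .nil B J
  | succ fuel ih =>
    rcases hnext : next last? B with _ | x
    · simpa [runAux, hnext] using Emits.nil B J
    · simpa [runAux, hnext] using Emits.cons (hmem hnext) (ih (some x) _ _)

theorem count_le_count_runAux {next : Option α → List α → Option α} {c : α → α → Prop}
    (hnext : IsGreedyChoice next c) {fuel : ℕ} {last? : Option α} {B J : List α}
    (hfuel : B.length + J.length ≤ fuel) {y : α} (hy : ∀ l ∈ last?, c l y) :
    B.count y ≤ (runAux next fuel last? B J).1.count y := by
  induction fuel generalizing last? B J with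
  | zero => simp_all
  | succ fuel ih =>
    by_cases hyB : y ∈ B
    · obtain ⟨x, hx, hxy⟩ := hnext.continues hyB hy
      have hxB := hnext.mem hx
      have hlen : (B.erase x ++ J.take 1).length + (J.drop 1).length ≤ fuel := by
        rw [length_append, length_erase_of_mem hxB, length_take, length_drop]
        have := length_pos_of_mem hxB
        omega
      have := ih hlen (last? := some x) (by simpa using hxy)
      rw [count_append, count_erase] at this
      simp only [runAux, hx, count_cons]
      split_ifs at this ⊢ <;> omega
    · simp [count_eq_zero_of_not_mem hyB]

theorem isGreedyChoice_nextUp : IsGreedyChoice (nextUp (α := α)) (· ≤ ·) where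
  mem {last? B x} h := by
    cases last? with
    | none => exact min?_mem h
    | some l => exact (mem_filter.1 (min?_mem h)).1
  continues {last? B y} hy hly := by
    cases last? with
    | none =>
      obtain ⟨x, hx⟩ := Option.ne_none_iff_exists'.1 (mt min?_eq_none_iff.1 (ne_nil_of_mem hy))
      exact ⟨x, hx, (le_min?_iff hx).1 le_rfl y hy⟩
    | some l =>
      have hyf : y ∈ B.filter fun x => decide (l ≤ x) := mem_filter.2 ⟨hy, by simpa using hly⟩
      obtain ⟨x, hx⟩ := Option.ne_none_iff_exists'.1 (mt min?_eq_none_iff.1 (ne_nil_of_mem hyf))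
      exact ⟨x, hx, (le_min?_iff hx).1 le_rfl y hyf⟩

theorem isGreedyChoice_nextDown : IsGreedyChoice (nextDown (α := α)) (· ≥ ·) where
  mem {last? B x} h := by
    cases last? with
    | none => exact max?_mem h
    | some l => exact (mem_filter.1 (max?_mem h)).1
  continues {last? B y} hy hly := by
    cases last? with
    | none =>
      obtain ⟨x, hx⟩ := Option.ne_none_iff_exists'.1 (mt max?_eq_none_iff.1 (ne_nil_of_mem hy))
      exact ⟨x, hx, (max?_le_iff hx).1 le_rfl y hy⟩
    | some l =>
      have hyf : y ∈ B.filter fun x => decide (x ≤ l) := mem_filter.2 ⟨hy, by simpa using hly⟩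
      obtain ⟨x, hx⟩ := Option.ne_none_iff_exists'.1 (mt max?_eq_none_iff.1 (ne_nil_of_mem hyf))
      exact ⟨x, hx, (max?_le_iff hx).1 le_rfl y hyf⟩

theorem emits_dirRun (d : Bool) (B J : List α) :
    Emits B J (dirRun d B J) (dirState d B J).1 (dirState d B J).2 := by
  cases d
  · simpa [dirRun, dirState, maxDecRun, decState, decAux_eq_runAux] using
      emits_runAux isGreedyChoice_nextDown.mem _ none B J
  · simpa [dirRun, dirState, maxIncRun, incState, incAux_eq_runAux] using
      emits_runAux isGreedyChoice_nextUp.mem _ none B J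

theorem subperm_dirRun (d : Bool) (B J : List α) : B <+~ dirRun d B J := by
  refine subperm_ext_iff.2 fun y _ => ?_
  cases d
  · simpa [dirRun, maxDecRun, decAux_eq_runAux] using
      count_le_count_runAux isGreedyChoice_nextDown le_rfl (last? := none)
        (J := J) (y := y) (by simp)
  · simpa [dirRun, maxIncRun, incAux_eq_runAux] using
      count_le_count_runAux isGreedyChoice_nextUp le_rfl (last? := none)
        (J := J) (y := y) (by simp)

theorem ProperWrites.emits {B J B' J' : List α} {P : List (List α)}
    (h : ProperWrites B J P B' J') : Emits B J P.flatten B' J' := by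
  induction h with
  | nil B J => exact .nil B J
  | step d B J P B' J' _ _ ih => exact (emits_dirRun d B J).append ih

end RunGen

theorem stmt_4_general {α : Type*} [LinearOrder α] (B J : List α)
    (P Q : List (List α)) (Bp Jp Bq Jq : List α)
    (hP : ProperWrites B J P Bp Jp) (hQ : ProperWrites B J Q Bq Jq)
    (hlen : Q.flatten.length ≤ P.flatten.length)
    (p' : List α) (Bp' Jp' : List α) (hp' : ProperWrites Bp Jp [p'] Bp' Jp') :
    (∀ e ∈ Q.flatten, e ∈ P.flatten ++ p') ∧ (Bp' ++ Jp').Sublist (Bq ++ Jq) := by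
  rcases hp' with _ | ⟨d, _, _, _, _, _, _, ⟨⟩⟩
  have hPe := hP.emits
  have hQe := hQ.emits
  have hQ_read : Q.flatten <+~ B ++ J.take Q.flatten.length :=
    (sublist_append_left _ Bq).subperm.trans hQe.perm_take.subperm
  have hread_mono : B ++ J.take Q.flatten.length <+ B ++ J.take P.flatten.length :=
    (take_sublist_take_left hlen).append_left B
  have hP_read : B ++ J.take P.flatten.length ~ P.flatten ++ Bp := hPe.perm_take.symm
  have hcover : Q.flatten <+~ P.flatten ++ dirRun d Bp Jp :=
    hQ_read.trans <| hread_mono.subperm.trans <| hP_read.subperm.trans <|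
      (subperm_append_left _).2 (subperm_dirRun d Bp Jp)
  refine ⟨hcover.subset, ?_⟩
  rw [(hPe.append (emits_dirRun d Bp Jp)).append_eq_diff, hQe.append_eq_diff]
  exact diff_sublist_diff_of_subperm hcover

/-- If from a decision state a proper algorithm can write the maximal-run sequence `P`
(k runs) or the maximal-run sequence `Q` (ℓ runs), with `|Q.flatten| ≤ |P.flatten|`, then
`P` extended by any further maximal run `p'` covers `Q.flatten`; consequently the
unwritten-element sequence after `P ++ [p']` is a subsequence of the unwritten-element
sequence after `Q`. -/
theorem stmt_4 {α : Type*} [LinearOrder α] (M : ℕ) (B J : List α) (hB : B.length ≤ M)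
    (P Q : List (List α)) (Bp Jp Bq Jq : List α)
    (hP : ProperWrites B J P Bp Jp) (hQ : ProperWrites B J Q Bq Jq)
    (hlen : Q.flatten.length ≤ P.flatten.length)
    (p' : List α) (Bp' Jp' : List α) (hp' : ProperWrites Bp Jp [p'] Bp' Jp') :
    (∀ e ∈ Q.flatten, e ∈ P.flatten ++ p') ∧ (Bp' ++ Jp').Sublist (Bq ++ Jq) :=
  stmt_4_general B J P Q Bp Jp Bq Jq hP hQ hlen p' Bp' Jp' hp'
end
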